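/- In the root system of type G₂ with short simple root α₁ and long simple root α₂, if X ⊆ Φ⁺ is a closed subset (closed under addition of roots) that contains α₂, 3α₁+α₂, and 3α₁+2α₂, is stable under the reflection s_{α₁} in the sense that s_{α₁}(X ∩ Φ⁺) ⊆ Φ⁺ implies s_{α₁}(X) = X, and additionally contains α₁+α₂ or 2α₁+α₂, then X = Φ⁺ \ {α₁}. -/

import Mathlib

open scoped RealInnerProductSpace

/-!
The simple reflection `s_{α₁}` acts on `aα₁ + bα₂` as `(3b - a)α₁ + bα₂`. It therefore swaps
`α₁ + α₂` and `2α₁ + α₂`, so stability puts both of them in `X`, and it sends `α₁` to `-α₁`,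
which is not a positive root, so stability keeps `α₁` out of `X`.
-/

namespace G2

variable {V : Type*} [NormedAddCommGroup V] [InnerProductSpace ℝ V] {α₁ α₂ : V}

theorem inner_smul_add_smul_left (h11 : ⟪α₁, α₁⟫ = 2) (h12 : ⟪α₂, α₁⟫ = -3) (a b : ℝ) :
    ⟪a • α₁ + b • α₂, α₁⟫ = 2 * a - 3 * b := by
  rw [inner_add_left, real_inner_smul_left, real_inner_smul_left, h11, h12]
  ring

theorem reflection_eq_of_eq_smul_add_smul (h11 : ⟪α₁, α₁⟫ = 2) (h12 : ⟪α₂, α₁⟫ = -3)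
    {a b : ℝ} {v : V} (hv : v = a • α₁ + b • α₂) :
    v - (2 * ⟪v, α₁⟫ / ⟪α₁, α₁⟫) • α₁ = (3 * b - a) • α₁ + b • α₂ := by
  rw [hv, inner_smul_add_smul_left h11 h12, h11]
  module

theorem neg_notMem_positiveRoots (h11 : ⟪α₁, α₁⟫ = 2) (h12 : ⟪α₂, α₁⟫ = -3) :
    -α₁ ∉ ({α₁, α₂, α₁ + α₂, (2 : ℝ) • α₁ + α₂, (3 : ℝ) • α₁ + α₂,
      (3 : ℝ) • α₁ + (2 : ℝ) • α₂} : Set V) := by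
  -- `⟪·, α₁⟫` is `-2` on `-α₁` but `2, -3, -1, 1, 3, 0` on the positive roots.
  intro hmem
  have hneg : ⟪-α₁, α₁⟫ = -2 := by rw [inner_neg_left, h11]
  rcases hmem with h | h | h | h | h | h <;> rw [h] at hneg <;>
    simp only [inner_add_left, real_inner_smul_left, h11, h12] at hneg <;> norm_num at hneg

end G2

theorem stmt_13_general {V : Type*} [NormedAddCommGroup V] [InnerProductSpace ℝ V]
    (α₁ α₂ : V)
    (h11 : ⟪α₁, α₁⟫ = 2) (h12 : ⟪α₂, α₁⟫ = -3)
    (s : V → V → V)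
    (hs : ∀ α v : V, s α v = v - (2 * ⟪v, α⟫ / ⟪α, α⟫) • α)
    (Pos : Set V)
    (hPos : Pos = {α₁, α₂, α₁ + α₂, (2 : ℝ) • α₁ + α₂, (3 : ℝ) • α₁ + α₂,
      (3 : ℝ) • α₁ + (2 : ℝ) • α₂})
    (X : Set V) (hXPos : X ⊆ Pos)
    (h1 : α₂ ∈ X) (h2 : (3 : ℝ) • α₁ + α₂ ∈ X) (h3 : (3 : ℝ) • α₁ + (2 : ℝ) • α₂ ∈ X)
    (hstab : (fun v => s α₁ v) '' X = X)
    (hextra : α₁ + α₂ ∈ X ∨ (2 : ℝ) • α₁ + α₂ ∈ X) :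
    X = Pos \ {α₁} := by
  subst hPos
  have hmaps : ∀ v ∈ X, s α₁ v ∈ X := fun v hv => hstab ▸ Set.mem_image_of_mem _ hv
  have s_swap : s α₁ (α₁ + α₂) = (2 : ℝ) • α₁ + α₂ := by
    rw [hs, G2.reflection_eq_of_eq_smul_add_smul h11 h12 (a := 1) (b := 1) (by simp)]
    norm_num
  have s_swap_symm : s α₁ ((2 : ℝ) • α₁ + α₂) = α₁ + α₂ := by
    rw [hs, G2.reflection_eq_of_eq_smul_add_smul h11 h12 (a := 2) (b := 1) (by simp)]
    norm_num
  have s_simple : s α₁ α₁ = -α₁ := by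
    rw [hs, G2.reflection_eq_of_eq_smul_add_smul h11 h12 (a := 1) (b := 0) (by simp)]
    norm_num
  have hmid : α₁ + α₂ ∈ X ∧ (2 : ℝ) • α₁ + α₂ ∈ X := by
    rcases hextra with h | h
    · exact ⟨h, s_swap ▸ hmaps _ h⟩
    · exact ⟨s_swap_symm ▸ hmaps _ h, h⟩
  have hα₁ : α₁ ∉ X := fun h =>
    G2.neg_notMem_positiveRoots h11 h12 (hXPos (s_simple ▸ hmaps _ h))
  refine (Set.subset_sdiff_singleton hXPos hα₁).antisymm ?_
  rintro v ⟨hv, hne : v ≠ α₁⟩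
  rcases hv with rfl | rfl | rfl | rfl | rfl | rfl
  exacts [absurd rfl hne, h1, hmid.1, hmid.2, h2, h3]

/-- In the G₂ root system with positive roots
Φ⁺ = {α₁, α₂, α₁+α₂, 2α₁+α₂, 3α₁+α₂, 3α₁+2α₂}, if X ⊆ Φ⁺ is closed, contains α₂, 3α₁+α₂ and
3α₁+2α₂, is stable under the simple reflection s_{α₁}, and contains α₁+α₂ or 2α₁+α₂,
then X = Φ⁺ \ {α₁}. -/
theorem stmt_13 {V : Type*} [NormedAddCommGroup V] [InnerProductSpace ℝ V]
    (α₁ α₂ : V)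
    (h11 : ⟪α₁, α₁⟫ = 2) (h22 : ⟪α₂, α₂⟫ = 6) (h12 : ⟪α₂, α₁⟫ = -3)
    (s : V → V → V)
    (hs : ∀ α v : V, s α v = v - (2 * ⟪v, α⟫ / ⟪α, α⟫) • α)
    (Pos : Set V)
    (hPos : Pos = {α₁, α₂, α₁ + α₂, (2 : ℝ) • α₁ + α₂, (3 : ℝ) • α₁ + α₂,
      (3 : ℝ) • α₁ + (2 : ℝ) • α₂})
    (Φ : Set V) (hΦ : Φ = Pos ∪ (fun α => -α) '' Pos)
    (X : Set V) (hXPos : X ⊆ Pos)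
    (hclosed : ∀ α ∈ X, ∀ β ∈ X, α + β ∈ Φ → α + β ∈ X)
    (h1 : α₂ ∈ X) (h2 : (3 : ℝ) • α₁ + α₂ ∈ X) (h3 : (3 : ℝ) • α₁ + (2 : ℝ) • α₂ ∈ X)
    (hstab : (fun v => s α₁ v) '' X = X)
    (hextra : α₁ + α₂ ∈ X ∨ (2 : ℝ) • α₁ + α₂ ∈ X) :
    X = Pos \ {α₁} :=
  stmt_13_general α₁ α₂ h11 h12 s hs Pos hPos X hXPos h1 h2 h3 hstab hextra
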